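/- arXiv:1705.04158 — 6 statements merged into one kernel-verified Lean document; each statement's English description precedes it below -/
import Mathlib

section
/- Let L ≥ 1 be an integer and let h, Δ be L×L matrices with entries in 𝔄, and set H = [[h, Δ], [−Δ̄, −h̄]] (a 2L×2L matrix over 𝔄 in the particle–hole grading). Let S^j = [[s^j, 0], [0, −(s^j)ᵀ]] for j = 1,2,3, where (s^j)ᵀ is the ordinary transpose of the complex matrix s^j, regarded as a 2L×2L matrix over 𝔄. If [S^j, H] = 0 for j = 1, 2, 3, then there exist operators h_red, Δ_red ∈ 𝔄 such that h_{l,l'} = δ_{l,l'}·h_red for all l, l' and Δ_{l,l'} = T_{l,l'}·Δ_red for all l, l' (i.e. h = h_red·1_L and Δ = Δ_red·T). -/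
noncomputable section
open Matrix
set_option synthInstance.maxHeartbeats 1000000
set_option maxHeartbeats 1000000

/-- The Hilbert space ℓ²(ℤ²;ℂ). -/
abbrev Hilb : Type := lp (fun _ : ℤ × ℤ => ℂ) 2

/-- The C*-algebra 𝔄 of bounded linear operators on ℓ²(ℤ²;ℂ). -/
abbrev Amod : Type := Hilb →L[ℂ] Hilb

/-- Conjugation ā = C ∘ a ∘ C with C the componentwise complex conjugation on ℓ²(ℤ²;ℂ). -/
noncomputable def opConj (a : Amod) : Amod :=
  LinearMap.mkContinuous
    { toFun := fun ψ => star (a (star ψ))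
      map_add' := fun x y => by simp [star_add, map_add]
      map_smul' := fun c x => by simp [star_smul, _root_.map_smul] }
    ‖a‖
    (fun x => by
      show ‖star (a (star x))‖ ≤ ‖a‖ * ‖x‖
      rw [norm_star]
      exact (a.le_opNorm _).trans (by rw [norm_star]))

/-- Operator transpose aᵀ = (ā)*. -/
noncomputable def opTrans (a : Amod) : Amod := star (opConj a)

/-- Standard spin matrix s³ (indices are 0-based, so `(spin3 L) l l' = (s+1-(l+1)) δ_{l,l'}`
with `s = (L-1)/2`). -/
noncomputable def spin3 (L : ℕ) : Matrix (Fin L) (Fin L) ℂ :=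
  Matrix.of fun l l' => if l = l' then ((L : ℂ) - 1 - 2 * (l : ℕ)) / 2 else 0

/-- Standard raising matrix s₊, with (s₊)_{l,l'} = √(l(L-l))·δ_{l',l+1} in 1-based indices. -/
noncomputable def spinP (L : ℕ) : Matrix (Fin L) (Fin L) ℂ :=
  Matrix.of fun l l' =>
    if (l' : ℕ) = (l : ℕ) + 1 then
      (Real.sqrt (((l : ℕ) + 1) * (L - ((l : ℕ) + 1))) : ℂ) else 0

/-- Standard lowering matrix s₋ = (s₊)*. -/
noncomputable def spinM (L : ℕ) : Matrix (Fin L) (Fin L) ℂ := (spinP L)ᴴ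

/-- Standard spin matrix s¹ = (s₋+s₊)/2. -/
noncomputable def spin1 (L : ℕ) : Matrix (Fin L) (Fin L) ℂ := (2 : ℂ)⁻¹ • (spinM L + spinP L)

/-- Standard spin matrix s² = i(s₋-s₊)/2. -/
noncomputable def spin2 (L : ℕ) : Matrix (Fin L) (Fin L) ℂ :=
  (Complex.I / 2) • (spinM L - spinP L)

/-- The three standard spin matrices (j = 0,1,2 corresponding to s¹,s²,s³). -/
noncomputable def spin (L : ℕ) : Fin 3 → Matrix (Fin L) (Fin L) ℂ
  | 0 => spin1 L
  | 1 => spin2 L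
  | 2 => spin3 L

/-- The cross-diagonal matrix T with T_{l,l'} = (-1)^{l+1} if l+l' = L+1 (1-based indices). -/
noncomputable def Tmat (L : ℕ) : Matrix (Fin L) (Fin L) ℂ :=
  Matrix.of fun l l' => if (l : ℕ) + (l' : ℕ) + 1 = L then ((-1 : ℂ)) ^ (l : ℕ) else 0

/-- A complex matrix viewed as a matrix with entries in the operator algebra 𝔄. -/
noncomputable def coeM {L : ℕ} (m : Matrix (Fin L) (Fin L) ℂ) : Matrix (Fin L) (Fin L) Amod :=
  m.map (algebraMap ℂ Amod)

/-- Entrywise conjugation M̄ of an operator-valued matrix. -/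
noncomputable def conjM {L : ℕ} (M : Matrix (Fin L) (Fin L) Amod) :
    Matrix (Fin L) (Fin L) Amod :=
  M.map opConj

/-- The BdG Hamiltonian H = [[h, Δ], [-Δ̄, -h̄]] in the particle-hole grading. -/
noncomputable def BdG {L : ℕ} (h Δ : Matrix (Fin L) (Fin L) Amod) :
    Matrix (Fin L ⊕ Fin L) (Fin L ⊕ Fin L) Amod :=
  Matrix.fromBlocks h Δ (-(conjM Δ)) (-(conjM h))

/-- The spin matrices S^j = [[s^j, 0], [0, -(s^j)ᵀ]] in the particle-hole grading. -/
noncomputable def Smat (L : ℕ) (j : Fin 3) :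
    Matrix (Fin L ⊕ Fin L) (Fin L ⊕ Fin L) Amod :=
  Matrix.fromBlocks (coeM (spin L j)) 0 0 (-(coeM ((spin L j)ᵀ)))

/-!
The upper blocks of `[S^j, H] = 0` say that `h` commutes with every `s^j` and that
`s^j Δ = -Δ (s^j)ᵀ`. As `s₊ = s¹ + i s²` and `s₊ᵀ = s₋`, the matrix `h` commutes with `s³`, which is
diagonal with distinct eigenvalues, and with `s₊`, whose superdiagonal has no zero entry; this
forces `h` to be scalar. The matrix `T` reverses the spin, `T s³ = -s³ T` and `T s₊ = -s₋ T`, so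
`Δ T` commutes with `s³` and `s₊` as well and is a scalar `c`; since `T² = (-1)^(L-1)`, this gives
`Δ = (-1)^(L-1) c T`.
-/

namespace Matrix

variable {n : Type*} [Fintype n]

theorem mul_apply_of_row_support {R : Type*} [NonUnitalNonAssocSemiring R] {m : Matrix n n R}
    {i k : n} (hm : ∀ k', k' ≠ k → m i k' = 0) (M : Matrix n n R) (j : n) :
    (m * M) i j = m i k * M k j := by
  rw [mul_apply, Finset.sum_eq_single k (fun k' _ hk' => by rw [hm k' hk', zero_mul])
    (fun hk => absurd (Finset.mem_univ k) hk)]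

theorem mul_apply_of_col_support {R : Type*} [NonUnitalNonAssocSemiring R] {m : Matrix n n R}
    {k j : n} (hm : ∀ k', k' ≠ k → m k' j = 0) (M : Matrix n n R) (i : n) :
    (M * m) i j = M i k * m k j := by
  rw [mul_apply, Finset.sum_eq_single k (fun k' _ hk' => by rw [hm k' hk', mul_zero])
    (fun hk => absurd (Finset.mem_univ k) hk)]

theorem commute_fromBlocks_zero_iff {m : Type*} [Fintype m] {R : Type*} [Semiring R]
    {P A : Matrix n n R} {B : Matrix n m R} {C : Matrix m n R} {Q D : Matrix m m R} :
    Commute (fromBlocks P 0 0 Q) (fromBlocks A B C D) ↔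
      Commute P A ∧ P * B = B * Q ∧ Q * C = C * P ∧ Commute Q D := by
  simp [Commute, SemiconjBy, fromBlocks_multiply, fromBlocks_inj]

variable [DecidableEq n] {A : Type*} [Ring A] [Algebra ℂ A]

theorem mapMatrix_mul_apply_of_row_support {m : Matrix n n ℂ} {i k : n}
    (hm : ∀ k', k' ≠ k → m i k' = 0) (M : Matrix n n A) (j : n) :
    ((Algebra.ofId ℂ A).mapMatrix m * M) i j = m i k • M k j := by
  rw [mul_apply_of_row_support (k := k) (by simp +contextual [hm]), Algebra.smul_def]
  rfl

theorem mul_mapMatrix_apply_of_col_support {m : Matrix n n ℂ} {k j : n}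
    (hm : ∀ k', k' ≠ k → m k' j = 0) (M : Matrix n n A) (i : n) :
    (M * (Algebra.ofId ℂ A).mapMatrix m) i j = m k j • M i k := by
  rw [mul_apply_of_col_support (k := k) (by simp +contextual [hm]), Algebra.smul_def]
  exact (Algebra.commutes _ _).symm

theorem eq_zero_of_commute_mapMatrix_diagonal {d : n → ℂ} (hd : Function.Injective d)
    {M : Matrix n n A} (hM : Commute ((Algebra.ofId ℂ A).mapMatrix (diagonal d)) M) {i j : n}
    (hij : i ≠ j) : M i j = 0 := by
  have hij' := congrFun₂ hM i j
  rw [mapMatrix_mul_apply_of_row_support (k := i) (fun k hk => diagonal_apply_ne _ hk.symm),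
    mul_mapMatrix_apply_of_col_support (k := j) (fun k hk => diagonal_apply_ne _ hk),
    diagonal_apply_eq, diagonal_apply_eq, ← sub_eq_zero, ← sub_smul] at hij'
  exact (smul_eq_zero.1 hij').resolve_left (sub_ne_zero.2 (hd.ne hij))

theorem commute_mul_mapMatrix_of_anticommute {a b t : Matrix n n ℂ} {Δ : Matrix n n A}
    (hΔ : (Algebra.ofId ℂ A).mapMatrix a * Δ = Δ * -(Algebra.ofId ℂ A).mapMatrix b)
    (ht : t * a = -(b * t)) :
    Commute ((Algebra.ofId ℂ A).mapMatrix a) (Δ * (Algebra.ofId ℂ A).mapMatrix t) := by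
  have ht' : (Algebra.ofId ℂ A).mapMatrix t * (Algebra.ofId ℂ A).mapMatrix a =
      -(Algebra.ofId ℂ A).mapMatrix b * (Algebra.ofId ℂ A).mapMatrix t := by
    rw [← map_mul, ht, ← neg_mul, map_mul, map_neg]
  exact Commute.symm (SemiconjBy.mul_left hΔ.symm ht')

end Matrix

section SpinMatrices

variable {L : ℕ}

theorem spin3_eq_diagonal :
    spin3 L = diagonal fun l : Fin L => ((L : ℂ) - 1 - 2 * (l : ℕ)) / 2 := by
  ext i j
  rw [diagonal_apply, spin3, of_apply]

theorem transpose_spin3 : (spin3 L)ᵀ = spin3 L := by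
  rw [spin3_eq_diagonal, diagonal_transpose]

theorem spinP_apply_of_ne {i j : Fin L} (hij : (j : ℕ) ≠ i + 1) : spinP L i j = 0 := by
  rw [spinP, of_apply, if_neg hij]

theorem spinP_apply_ne_zero {i j : Fin L} (hij : (j : ℕ) = i + 1) : spinP L i j ≠ 0 := by
  have hj := j.isLt
  rw [spinP, of_apply, if_pos hij, Complex.ofReal_ne_zero, Real.sqrt_ne_zero']
  have : ((i : ℕ) : ℝ) + 1 < L := by exact_mod_cast hij ▸ hj
  nlinarith

theorem spinP_eq_spin1_add_I_smul_spin2 : spinP L = spin1 L + Complex.I • spin2 L := by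
  rw [spin1, spin2, smul_smul, mul_div_assoc', Complex.I_mul_I]
  module

theorem transpose_spinP : (spinP L)ᵀ = spinM L := by
  ext i j
  simp only [transpose_apply, spinM, conjTranspose_apply, spinP, of_apply]
  split_ifs <;> simp [Complex.conj_ofReal]

theorem spinP_rev_apply_comm (i j : Fin L) : spinP L i.rev j = spinP L j.rev i := by
  have hi := i.isLt
  have hj := j.isLt
  simp only [spinP, of_apply, Fin.val_rev]
  by_cases hij : (i : ℕ) + j = L
  · rw [if_pos (by omega), if_pos (by omega), Nat.cast_sub (by omega), Nat.cast_sub (by omega)]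
    have hij' : ((i : ℕ) : ℝ) + (j : ℕ) = L := by exact_mod_cast hij
    push_cast
    congr 2
    linear_combination ((j : ℕ) - (i : ℕ) : ℝ) * hij'
  · rw [if_neg (by omega), if_neg (by omega)]

theorem Tmat_apply (i j : Fin L) : Tmat L i j = if j = i.rev then (-1 : ℂ) ^ (i : ℕ) else 0 := by
  simp only [Tmat, of_apply, Fin.ext_iff, Fin.val_rev]
  have := i.isLt
  congr 1
  exact propext (by omega)

theorem Tmat_apply_of_ne {i j : Fin L} (hij : j ≠ i.rev) : Tmat L i j = 0 := by
  rw [Tmat_apply, if_neg hij]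

theorem Tmat_mul_Tmat : Tmat L * Tmat L = (-1 : ℂ) ^ (L - 1) • (1 : Matrix (Fin L) (Fin L) ℂ) := by
  ext i j
  rw [mul_apply_of_row_support (k := i.rev) (fun k hk => Tmat_apply_of_ne hk), Tmat_apply,
    Tmat_apply, Fin.rev_rev, Matrix.smul_apply, one_apply]
  rcases eq_or_ne j i with rfl | hij
  · rw [if_pos rfl, if_pos rfl, if_pos rfl, ← pow_add, Fin.val_rev, smul_eq_mul, mul_one]
    congr 1
    have := j.isLt
    omega
  · rw [if_neg hij, if_neg (Ne.symm hij), mul_zero, smul_zero]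

theorem Tmat_mul_spin3 : Tmat L * spin3 L = -(spin3 L * Tmat L) := by
  ext i j
  rw [spin3_eq_diagonal, mul_diagonal, neg_apply, diagonal_mul, Tmat_apply]
  split_ifs with hij
  · subst hij
    have := i.isLt
    rw [Fin.val_rev, Nat.cast_sub (by omega)]
    push_cast
    ring
  · simp

theorem Tmat_mul_spinP : Tmat L * spinP L = -(spinM L * Tmat L) := by
  ext i j
  rw [mul_apply_of_row_support (k := i.rev) (fun k hk => Tmat_apply_of_ne hk), neg_apply,
    mul_apply_of_col_support (k := j.rev) (fun k hk => Tmat_apply_of_ne fun h => hk (by simp [h])),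
    ← transpose_spinP, transpose_apply, ← spinP_rev_apply_comm, Tmat_apply, Tmat_apply,
    if_pos rfl, if_pos (Fin.rev_rev j).symm]
  by_cases hi : (i : ℕ) = j.rev + 1
  · rw [hi, pow_succ]
    ring
  · rw [spinP_apply_of_ne hi]
    ring

variable {A : Type*} [Ring A] [Algebra ℂ A]

theorem exists_eq_scalar_of_commute_spin3_spinP {M : Matrix (Fin L) (Fin L) A}
    (h3 : Commute ((Algebra.ofId ℂ A).mapMatrix (spin3 L)) M)
    (hP : Commute ((Algebra.ofId ℂ A).mapMatrix (spinP L)) M) :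
    ∃ a : A, M = scalar (Fin L) a := by
  have off_diag {i j : Fin L} (hij : i ≠ j) : M i j = 0 := by
    refine eq_zero_of_commute_mapMatrix_diagonal (fun i j hij => ?_) (spin3_eq_diagonal ▸ h3) hij
    simpa [Fin.ext_iff] using hij
  have diag_succ {i j : Fin L} (hij : (j : ℕ) = i + 1) : M j j = M i i := by
    have hPij := congrFun₂ hP i j
    rw [mapMatrix_mul_apply_of_row_support (k := j)
        (fun k hk => spinP_apply_of_ne fun h => hk (Fin.ext (h.trans hij.symm))),
      mul_mapMatrix_apply_of_col_support (k := i)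
        (fun k hk => spinP_apply_of_ne fun h => hk (Fin.ext (by omega)))] at hPij
    exact smul_right_injective A (spinP_apply_ne_zero hij) hPij
  have diag_eq_diag_zero : ∀ i : Fin L, M i i = M ⟨0, i.pos⟩ ⟨0, i.pos⟩ := by
    rintro ⟨n, hn⟩
    induction n with
    | zero => rfl
    | succ n ih => rw [diag_succ (i := ⟨n, by omega⟩) rfl, ih]
  rcases isEmpty_or_nonempty (Fin L) with hempty | ⟨⟨l₀⟩⟩
  · exact ⟨0, Subsingleton.elim _ _⟩
  refine ⟨M l₀ l₀, ext fun i j => ?_⟩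
  rcases eq_or_ne i j with rfl | hij
  · rw [scalar_apply, diagonal_apply_eq, diag_eq_diag_zero, diag_eq_diag_zero l₀]
  · rw [off_diag hij, scalar_apply, diagonal_apply_ne _ hij]

theorem commute_mapMatrix_spinP {M : Matrix (Fin L) (Fin L) A}
    (h1 : Commute ((Algebra.ofId ℂ A).mapMatrix (spin1 L)) M)
    (h2 : Commute ((Algebra.ofId ℂ A).mapMatrix (spin2 L)) M) :
    Commute ((Algebra.ofId ℂ A).mapMatrix (spinP L)) M := by
  rw [spinP_eq_spin1_add_I_smul_spin2, map_add, map_smul]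
  exact h1.add_left (h2.smul_left _)

theorem mapMatrix_spinP_mul_eq {M : Matrix (Fin L) (Fin L) A}
    (h1 : (Algebra.ofId ℂ A).mapMatrix (spin1 L) * M =
      M * -(Algebra.ofId ℂ A).mapMatrix (spin1 L)ᵀ)
    (h2 : (Algebra.ofId ℂ A).mapMatrix (spin2 L) * M =
      M * -(Algebra.ofId ℂ A).mapMatrix (spin2 L)ᵀ) :
    (Algebra.ofId ℂ A).mapMatrix (spinP L) * M = M * -(Algebra.ofId ℂ A).mapMatrix (spinM L) := by
  rw [← transpose_spinP, spinP_eq_spin1_add_I_smul_spin2, transpose_add, transpose_smul, map_add,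
    map_smul, map_add, map_smul, add_mul, smul_mul_assoc, h1, h2, neg_add, mul_add, ← smul_neg,
    mul_smul_comm]

theorem eq_Tmat_smul_of_mul_Tmat_eq_scalar {Δ : Matrix (Fin L) (Fin L) A} {c : A}
    (hc : Δ * (Algebra.ofId ℂ A).mapMatrix (Tmat L) = scalar (Fin L) c) (l l' : Fin L) :
    Δ l l' = Tmat L l l' • ((-1 : ℂ) ^ (L - 1) • c) := by
  have hΔ : Δ =
      (-1 : ℂ) ^ (L - 1) • (scalar (Fin L) c * (Algebra.ofId ℂ A).mapMatrix (Tmat L)) := by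
    rw [← hc, mul_assoc, ← map_mul, Tmat_mul_Tmat, map_smul, map_one, mul_smul_comm, mul_one,
      smul_smul, ← mul_pow, neg_one_mul, neg_neg, one_pow, one_smul]
  rw [hΔ, Matrix.smul_apply, scalar_apply, diagonal_mul]
  change _ • (c * algebraMap ℂ A (Tmat L l l')) = _
  rw [← Algebra.commutes, ← Algebra.smul_def, smul_comm]

end SpinMatrices

theorem su2_invariant_reduction_general (L : ℕ)
    (h Δ : Matrix (Fin L) (Fin L) Amod)
    (hinv : ∀ j : Fin 3, Smat L j * BdG h Δ = BdG h Δ * Smat L j) :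
    ∃ hred Δred : Amod,
      (∀ l l' : Fin L, h l l' = if l = l' then hred else 0) ∧
      (∀ l l' : Fin L, Δ l l' = Tmat L l l' • Δred) := by
  have hblock (j : Fin 3) := commute_fromBlocks_zero_iff.1 (hinv j)
  obtain ⟨hred, rfl⟩ := exists_eq_scalar_of_commute_spin3_spinP (hblock 2).1
    (commute_mapMatrix_spinP (hblock 0).1 (hblock 1).1)
  have hΔ3 := (hblock 2).2.1
  rw [show spin L 2 = spin3 L from rfl, transpose_spin3] at hΔ3
  obtain ⟨c, hc⟩ := exists_eq_scalar_of_commute_spin3_spinP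
    (commute_mul_mapMatrix_of_anticommute hΔ3 Tmat_mul_spin3)
    (commute_mul_mapMatrix_of_anticommute
      (mapMatrix_spinP_mul_eq (hblock 0).2.1 (hblock 1).2.1) Tmat_mul_spinP)
  exact ⟨hred, _, fun l l' => by rw [scalar_apply, diagonal_apply],
    eq_Tmat_smul_of_mul_Tmat_eq_scalar hc⟩

/-- Proposition 2.1, SU(2)-invariance reduction: if the BdG Hamiltonian
H = [[h, Δ], [-Δ̄, -h̄]] commutes with S^j for j = 1,2,3, then h = h_red ⊗ 1_L and
Δ = Δ_red ⊗ T. -/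
theorem su2_invariant_reduction (L : ℕ) (hL : 1 ≤ L)
    (h Δ : Matrix (Fin L) (Fin L) Amod)
    (hinv : ∀ j : Fin 3, Smat L j * BdG h Δ = BdG h Δ * Smat L j) :
    ∃ hred Δred : Amod,
      (∀ l l' : Fin L, h l l' = if l = l' then hred else 0) ∧
      (∀ l l' : Fin L, Δ l l' = Tmat L l l' • Δred) :=
  su2_invariant_reduction_general L h Δ hinv
end
end

section
/- Let L ≥ 1 be an integer, let h, Δ be L×L matrices with entries in 𝔄, set H = [[h, Δ], [−Δ̄, −h̄]] and S³ = [[s³, 0], [0, −(s³)ᵀ]]. Then [S³, H] = 0 if and only if h is diagonal in the spin index (h_{l,l'} = 0 whenever l ≠ l') and Δ is cross-diagonal in the spin index (Δ_{l,l'} = 0 whenever l + l' ≠ L + 1). In that case there is a permutation matrix Π ∈ Mat_{2L}(ℂ) such that Π H Π* is block diagonal with L blocks of size 2×2 over 𝔄, the l-th block being [[h_{l,l}, Δ_{l,L+1−l}], [−(Δ_{L+1−l,l})‾, −(h_{L+1−l,L+1−l})‾]]. -/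
/-!
`S³` is block diagonal with blocks `D` and `-D`, where `D = diag(s + 1 - l)`, so `[S³, H] = 0`
splits into `[D, h] = 0`, `DΔ = -ΔD` and the conjugate equations for the lower blocks.
Entrywise these read `(d_l - d_l') h_{l,l'} = 0` and `(d_l + d_l') Δ_{l,l'} = 0`; the `d_l` are
distinct and `d_l + d_l'` vanishes exactly when `l + l' = L + 1`. Pairing the particle index `l`
with the hole index `L + 1 - l` then cuts `H` into `L` blocks of size `2 × 2`.
-/

noncomputable section
open Matrix
set_option synthInstance.maxHeartbeats 1000000
set_option maxHeartbeats 1000000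

namespace Matrix

variable {n R : Type*} [Fintype n] [Ring R]

theorem fromBlocks_neg_commute_iff (D A B C E : Matrix n n R) :
    Commute (fromBlocks D 0 0 (-D)) (fromBlocks A B C E) ↔
      Commute D A ∧ D * B = -(B * D) ∧ D * C = -(C * D) ∧ Commute D E := by
  simp only [Commute, SemiconjBy, fromBlocks_multiply, fromBlocks_inj, Matrix.zero_mul,
    Matrix.mul_zero, Matrix.neg_mul, Matrix.mul_neg, add_zero, zero_add, neg_inj]
  constructor
  · rintro ⟨hA, hB, hC, hE⟩
    exact ⟨hA, hB, by rw [← hC, neg_neg], hE⟩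
  · rintro ⟨hA, hB, hC, hE⟩
    exact ⟨hA, hB, by rw [hC, neg_neg], hE⟩

variable {K : Type*} [Field K] [Algebra K R] [DecidableEq n]

theorem diagonal_algebraMap_mul_apply (d : n → K) (M : Matrix n n R) (i j : n) :
    (diagonal (algebraMap K R ∘ d) * M) i j = d i • M i j := by
  rw [diagonal_mul, Function.comp_apply, Algebra.smul_def]

theorem mul_diagonal_algebraMap_apply (d : n → K) (M : Matrix n n R) (i j : n) :
    (M * diagonal (algebraMap K R ∘ d)) i j = d j • M i j := by
  rw [mul_diagonal, Function.comp_apply, ← Algebra.commutes, Algebra.smul_def]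

theorem commute_diagonal_algebraMap_iff (d : n → K) (M : Matrix n n R) :
    Commute (diagonal (algebraMap K R ∘ d)) M ↔ ∀ i j, d i ≠ d j → M i j = 0 := by
  rw [Commute, SemiconjBy, ← Matrix.ext_iff]
  refine forall₂_congr fun i j => ?_
  rw [diagonal_algebraMap_mul_apply, mul_diagonal_algebraMap_apply, ← sub_eq_zero, ← sub_smul,
    smul_eq_zero, sub_eq_zero, or_iff_not_imp_left]

theorem diagonal_algebraMap_mul_eq_neg_iff (d : n → K) (M : Matrix n n R) :
    diagonal (algebraMap K R ∘ d) * M = -(M * diagonal (algebraMap K R ∘ d)) ↔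
      ∀ i j, d i + d j ≠ 0 → M i j = 0 := by
  rw [← Matrix.ext_iff]
  refine forall₂_congr fun i j => ?_
  rw [neg_apply, diagonal_algebraMap_mul_apply, mul_diagonal_algebraMap_apply,
    eq_neg_iff_add_eq_zero, ← add_smul, smul_eq_zero, or_iff_not_imp_left]

end Matrix

def Equiv.finTwoProdEquivSum {n : Type*} (σ : Equiv.Perm n) : Fin 2 × n ≃ n ⊕ n where
  toFun p := ![Sum.inl p.2, Sum.inr (σ p.2)] p.1
  invFun := Sum.elim (fun i => (0, i)) (fun i => (1, σ.symm i))
  left_inv := by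
    rintro ⟨k, i⟩
    fin_cases k <;> simp
  right_inv := by
    rintro (i | i) <;> simp

namespace Matrix

variable {n α : Type*} [DecidableEq n] [Zero α]

theorem fromBlocks_submatrix_finTwoProdEquivSum (σ : Equiv.Perm n) {A B C D : Matrix n n α}
    (hA : A.IsDiag) (hB : (B.submatrix id σ).IsDiag) (hC : (C.submatrix σ id).IsDiag)
    (hD : (D.submatrix σ σ).IsDiag) :
    (fromBlocks A B C D).submatrix (Equiv.finTwoProdEquivSum σ) (Equiv.finTwoProdEquivSum σ) =
      blockDiagonal fun i => !![A i i, B i (σ i); C (σ i) i, D (σ i) (σ i)] := by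
  ext ⟨k, i⟩ ⟨k', j⟩
  rw [blockDiagonal_apply]
  split_ifs with hij
  · subst hij
    fin_cases k <;> fin_cases k' <;> rfl
  · fin_cases k <;> fin_cases k'
    exacts [hA hij, hB hij, hC hij, hD hij]

end Matrix

theorem Fin.val_add_val_rev_ne {L : ℕ} {l l' : Fin L} (h : l ≠ l') :
    (l : ℕ) + l'.rev + 2 ≠ L + 1 := by
  have := Fin.val_ne_of_ne h
  rw [Fin.val_rev]
  omega

section CrossDiagonal

variable {L : ℕ} {α : Type*} [Zero α] {M : Matrix (Fin L) (Fin L) α}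

theorem isDiag_submatrix_id_revPerm (hM : ∀ l l' : Fin L, (l : ℕ) + l' + 2 ≠ L + 1 → M l l' = 0) :
    (M.submatrix id Fin.revPerm).IsDiag :=
  fun _ _ hne => hM _ _ (Fin.val_add_val_rev_ne hne)

theorem isDiag_submatrix_revPerm_id (hM : ∀ l l' : Fin L, (l : ℕ) + l' + 2 ≠ L + 1 → M l l' = 0) :
    (M.submatrix Fin.revPerm id).IsDiag :=
  fun l l' hne => hM _ _ <| by
    simpa only [Nat.add_comm (l' : ℕ), Fin.revPerm_apply, id] using Fin.val_add_val_rev_ne hne.symm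

end CrossDiagonal

theorem opConj_zero : opConj 0 = 0 := by
  ext ψ
  simp [opConj]

/-- `s + 1 - l` in the `1`-based indexing of the paper. -/
def spin3Eigenvalue (L : ℕ) (l : Fin L) : ℂ := ((L : ℂ) - 1 - 2 * (l : ℕ)) / 2

theorem spin3Eigenvalue_injective (L : ℕ) : Function.Injective (spin3Eigenvalue L) := by
  intro l l' h
  have : ((l : ℕ) : ℂ) = (l' : ℕ) := by
    rw [spin3Eigenvalue, spin3Eigenvalue] at h
    linear_combination (-1 : ℂ) * h
  exact Fin.ext (Nat.cast_injective this)

theorem spin3Eigenvalue_add_eq_zero_iff {L : ℕ} (l l' : Fin L) :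
    spin3Eigenvalue L l + spin3Eigenvalue L l' = 0 ↔ (l : ℕ) + l' + 2 = L + 1 := by
  rw [← Nat.cast_inj (R := ℂ), spin3Eigenvalue, spin3Eigenvalue]
  push_cast
  constructor <;> intro h <;> linear_combination (-1 : ℂ) * h

theorem spin3_eq_diagonal_s2 (L : ℕ) : spin3 L = diagonal (spin3Eigenvalue L) := by
  ext l l'
  simp [spin3, spin3Eigenvalue, diagonal_apply]

theorem Smat_two_eq (L : ℕ) :
    Smat L 2 = fromBlocks (diagonal (algebraMap ℂ Amod ∘ spin3Eigenvalue L)) 0 0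
      (-diagonal (algebraMap ℂ Amod ∘ spin3Eigenvalue L)) := by
  simp only [Smat, spin, spin3_eq_diagonal_s2, diagonal_transpose, coeM,
    diagonal_map (map_zero (algebraMap ℂ Amod))]
  rfl

theorem commute_Smat_two_BdG_iff {L : ℕ} (h Δ : Matrix (Fin L) (Fin L) Amod) :
    Commute (Smat L 2) (BdG h Δ) ↔
      h.IsDiag ∧ ∀ l l' : Fin L, (l : ℕ) + l' + 2 ≠ L + 1 → Δ l l' = 0 := by
  simp only [Smat_two_eq, BdG, fromBlocks_neg_commute_iff, commute_diagonal_algebraMap_iff,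
    diagonal_algebraMap_mul_eq_neg_iff, (spin3Eigenvalue_injective L).ne_iff, Ne,
    spin3Eigenvalue_add_eq_zero_iff]
  refine ⟨fun ⟨hh, hΔ, _, _⟩ => ⟨hh, hΔ⟩, fun ⟨hh, hΔ⟩ => ⟨hh, hΔ, ?_, ?_⟩⟩
  · intro l l' hne
    show -opConj (Δ l l') = 0
    rw [hΔ l l' hne, opConj_zero, neg_zero]
  · intro l l' hne
    show -opConj (h l l') = 0
    rw [hh hne, opConj_zero, neg_zero]

/-- The permutation matrix `Π` is the relabelling `e` of the indices: `Π H Π* = H.submatrix e e`. -/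
theorem u1_invariant_reduction_general (L : ℕ)
    (h Δ : Matrix (Fin L) (Fin L) Amod) :
    (Smat L 2 * BdG h Δ = BdG h Δ * Smat L 2 ↔
      ((∀ l l' : Fin L, l ≠ l' → h l l' = 0) ∧
        (∀ l l' : Fin L, (l : ℕ) + (l' : ℕ) + 2 ≠ L + 1 → Δ l l' = 0))) ∧
    (Smat L 2 * BdG h Δ = BdG h Δ * Smat L 2 →
      ∃ e : (Fin 2 × Fin L) ≃ (Fin L ⊕ Fin L),
        (BdG h Δ).submatrix e e =
          Matrix.blockDiagonal (fun l : Fin L =>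
            !![h l l, Δ l l.rev;
               -(opConj (Δ l.rev l)), -(opConj (h l.rev l.rev))])) := by
  refine ⟨commute_Smat_two_BdG_iff h Δ, fun hcomm => ?_⟩
  obtain ⟨hh, hΔ⟩ := (commute_Smat_two_BdG_iff h Δ).mp hcomm
  have hconj : -opConj 0 = 0 := by rw [opConj_zero, neg_zero]
  exact ⟨Equiv.finTwoProdEquivSum Fin.revPerm,
    fromBlocks_submatrix_finTwoProdEquivSum Fin.revPerm hh (isDiag_submatrix_id_revPerm hΔ)
      ((isDiag_submatrix_revPerm_id hΔ).map (f := fun a => -opConj a) hconj)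
      ((hh.submatrix Fin.revPerm.injective).map (f := fun a => -opConj a) hconj)⟩

/-- Proposition 2.2, U(1)-invariance reduction: [S³, H] = 0 iff h is
diagonal and Δ is cross-diagonal in the spin index; in that case H is conjugate, by a
permutation (of the 2L indices, i.e. by a permutation matrix Π ∈ Mat_{2L}(ℂ), realized here
as a relabelling of the indices by an equivalence `e`, so that `Π H Π* = H.submatrix e e`),
to the block-diagonal matrix with L blocks of size 2×2, the l-th block being
[[h_{l,l}, Δ_{l,L+1-l}], [-(Δ_{L+1-l,l})‾, -(h_{L+1-l,L+1-l})‾]]. -/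
theorem u1_invariant_reduction (L : ℕ) (hL : 1 ≤ L)
    (h Δ : Matrix (Fin L) (Fin L) Amod) :
    (Smat L 2 * BdG h Δ = BdG h Δ * Smat L 2 ↔
      ((∀ l l' : Fin L, l ≠ l' → h l l' = 0) ∧
        (∀ l l' : Fin L, (l : ℕ) + (l' : ℕ) + 2 ≠ L + 1 → Δ l l' = 0))) ∧
    (Smat L 2 * BdG h Δ = BdG h Δ * Smat L 2 →
      ∃ e : (Fin 2 × Fin L) ≃ (Fin L ⊕ Fin L),
        (BdG h Δ).submatrix e e =
          Matrix.blockDiagonal (fun l : Fin L =>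
            !![h l l, Δ l l.rev;
               -(opConj (Δ l.rev l)), -(opConj (h l.rev l.rev))])) :=
  u1_invariant_reduction_general L h Δ
end
end

section
/- Let L ≥ 1 be an integer and let Δ be an L×L matrix with entries in 𝔄 of the form Δ_{l,l'} = T_{l,l'}·Δ_red for some Δ_red ∈ 𝔄. If Δ satisfies the particle–hole constraint Δ* = −Δ̄ (entrywise: (Δ_{l',l})* = −(Δ_{l,l'})‾ for all l, l'), then the operator transpose of Δ_red satisfies (Δ_red)ᵀ = −Δ_red if L is odd (integer spin), and (Δ_red)ᵀ = Δ_red if L is even (half-integer spin). -/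
noncomputable section
open Matrix
set_option synthInstance.maxHeartbeats 1000000
set_option maxHeartbeats 1000000

/-! Only the corner entry (1, L) of the constraint is needed: there T_{1,L} = 1 and
T_{L,1} = (-1)^{L+1}, so it reads (-1)^{L+1} Δ_red* = -Δ̄_red, and taking adjoints gives
Δ_redᵀ = (-1)^L Δ_red. -/

lemma Tmat_first_last {L : ℕ} (hL : 0 < L) :
    Tmat L ⟨0, hL⟩ ⟨L - 1, Nat.sub_lt hL one_pos⟩ = 1 := by
  simp [Tmat, Nat.sub_add_cancel (Nat.one_le_of_lt hL)]

lemma Tmat_last_first {L : ℕ} (hL : 0 < L) :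
    Tmat L ⟨L - 1, Nat.sub_lt hL one_pos⟩ ⟨0, hL⟩ = (-1) ^ (L - 1) := by
  simp [Tmat, Nat.sub_add_cancel (Nat.one_le_of_lt hL)]

lemma opTrans_eq_neg_of_star_eq_neg_opConj {a b : Amod} (h : star b = -opConj a) :
    opTrans a = -b := by
  rw [opTrans, ← neg_neg (opConj a), ← h, star_neg, star_star]

/-- if Δ = Δ_red ⊗ T satisfies the particle-hole constraint Δ* = -Δ̄, then
Δ_red is anti-symmetric (w.r.t. the operator transpose) for odd L (integer spin) and
symmetric for even L (half-integer spin). -/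
theorem pairing_potential_symmetry (L : ℕ) (hL : 1 ≤ L)
    (Δ : Matrix (Fin L) (Fin L) Amod) (Δred : Amod)
    (hform : ∀ l l' : Fin L, Δ l l' = Tmat L l l' • Δred)
    (hphs : ∀ l l' : Fin L, star (Δ l' l) = -(opConj (Δ l l'))) :
    (Odd L → opTrans Δred = -Δred) ∧ (Even L → opTrans Δred = Δred) := by
  have hL0 : 0 < L := hL
  have hTrans : opTrans Δred = -((-1 : ℂ) ^ (L - 1) • Δred) := by
    have h := hphs ⟨0, hL0⟩ ⟨L - 1, Nat.sub_lt hL0 one_pos⟩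
    rw [hform, hform, Tmat_first_last, Tmat_last_first, one_smul] at h
    exact opTrans_eq_neg_of_star_eq_neg_opConj h
  refine ⟨fun hodd => ?_, fun heven => ?_⟩
  · rw [hTrans, (Nat.Odd.sub_odd hodd odd_one).neg_one_pow, one_smul]
  · rw [hTrans, (Nat.Even.sub_odd hL heven odd_one).neg_one_pow, neg_one_smul, neg_neg]
end
end

section
/- Let N ≥ 1 and let H ∈ Mat_{2N}(ℂ) be Hermitian with Kᵀ·H̄·K = −H. Then there exist a unitary W ∈ Mat_{2N}(ℂ) satisfying Kᵀ·W̄·K = W and a diagonal matrix D ∈ Mat_N(ℝ) such that W·H·W* = [[D, 0], [0, −D]]. -/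
/-!
The particle-hole conjugation `θ x = K x̄` is an antiunitary involution anticommuting with `H`,
so it maps `μ`-eigenvectors of `H` to `(-μ)`-eigenvectors. Hence `H` has a unit eigenvector `v`
with `⟪v, θ v⟫ = 0`: for `μ ≠ 0` by orthogonality of eigenspaces, and for `H = 0` one normalises
`e + I f` with `e, f` orthonormal and fixed by `θ`. The orthogonal complement of `span {v, θ v}`
is invariant under `H` and `θ`, so induction gives an orthonormal eigenbasis
`v₁, …, v_N, θ v₁, …, θ v_N`, and `W` is the matrix whose rows are the conjugates of these vectors.
-/

noncomputable section
open Matrix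

/-- The particle-hole symmetry matrix K = [[0, 1_N], [1_N, 0]]. -/
def Kmat (N : ℕ) : Matrix (Fin N ⊕ Fin N) (Fin N ⊕ Fin N) ℂ :=
  Matrix.fromBlocks 0 1 1 0

local notation "⟪" x ", " y "⟫" => @inner ℂ _ _ x y

lemma Orthonormal.fin_cons {𝕜 F : Type*} [RCLike 𝕜] [NormedAddCommGroup F]
    [InnerProductSpace 𝕜 F] {n : ℕ} {v₀ : F} {v : Fin n → F} (h₀ : ‖v₀‖ = 1) (hv : Orthonormal 𝕜 v)
    (h : ∀ j, @inner 𝕜 _ _ v₀ (v j) = 0) :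
    Orthonormal 𝕜 (Fin.cons v₀ v : Fin (n + 1) → F) := by
  refine ⟨Fin.cases h₀ hv.1, fun i j hij => ?_⟩
  cases i using Fin.cases <;> cases j using Fin.cases
  · exact absurd rfl hij
  · exact h _
  · exact inner_eq_zero_symm.mp (h _)
  · exact hv.2 fun hij' => hij (congrArg Fin.succ hij')

section Antiunitary

variable {E : Type*} [NormedAddCommGroup E] [InnerProductSpace ℂ E]

lemma LinearMap.IsSymmetric.mapsTo_orthogonal {T : E →ₗ[ℂ] E} (hT : T.IsSymmetric)
    {S : Submodule ℂ E} (hS : ∀ x ∈ S, T x ∈ S) :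
    ∀ x ∈ Sᗮ, T x ∈ Sᗮ := by
  intro x hx
  rw [Submodule.mem_orthogonal]
  intro u hu
  rw [← hT]
  exact Submodule.inner_right_of_mem_orthogonal (hS u hu) hx

lemma exists_norm_eq_one_fixed [Nontrivial E] (θ : E →ₗ⋆[ℂ] E) (hθ : ∀ x, θ (θ x) = x) :
    ∃ e : E, ‖e‖ = 1 ∧ θ e = e := by
  obtain ⟨x, hx⟩ := exists_ne (0 : E)
  -- `x + θ x` is fixed, and when it vanishes `I • x` is fixed instead
  obtain ⟨y, hy, hθy⟩ : ∃ y : E, y ≠ 0 ∧ θ y = y := by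
    by_cases h : x + θ x = 0
    · refine ⟨Complex.I • x, smul_ne_zero Complex.I_ne_zero hx, ?_⟩
      rw [θ.map_smulₛₗ, eq_neg_of_add_eq_zero_right h]
      simp [Complex.conj_I]
    · exact ⟨x + θ x, h, by rw [map_add, hθ, add_comm]⟩
  refine ⟨(‖y‖ : ℂ)⁻¹ • y, norm_smul_inv_norm hy, ?_⟩
  rw [θ.map_smulₛₗ, hθy, map_inv₀, Complex.conj_ofReal]

lemma mapsTo_orthogonal_of_inner_map_map (θ : E →ₗ⋆[ℂ] E) (hθ : ∀ x, θ (θ x) = x)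
    (hinner : ∀ x y, ⟪θ x, θ y⟫ = ⟪y, x⟫) {S : Submodule ℂ E} (hS : ∀ x ∈ S, θ x ∈ S) :
    ∀ x ∈ Sᗮ, θ x ∈ Sᗮ := by
  intro x hx
  rw [Submodule.mem_orthogonal]
  intro u hu
  rw [← hθ u, hinner]
  exact Submodule.inner_left_of_mem_orthogonal (hS u hu) hx

lemma exists_norm_eq_one_inner_map_self_eq_zero [FiniteDimensional ℂ E] (θ : E →ₗ⋆[ℂ] E)
    (hθ : ∀ x, θ (θ x) = x) (hinner : ∀ x y, ⟪θ x, θ y⟫ = ⟪y, x⟫)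
    (hE : 2 ≤ Module.finrank ℂ E) :
    ∃ u : E, ‖u‖ = 1 ∧ ⟪u, θ u⟫ = 0 := by
  have : Nontrivial E := Module.nontrivial_of_finrank_pos (by omega : 0 < Module.finrank ℂ E)
  obtain ⟨e, he, hθe⟩ := exists_norm_eq_one_fixed θ hθ
  have hθF : ∀ x ∈ (ℂ ∙ e)ᗮ, θ x ∈ (ℂ ∙ e)ᗮ :=
    mapsTo_orthogonal_of_inner_map_map θ hθ hinner fun x hx => by
      obtain ⟨c, rfl⟩ := Submodule.mem_span_singleton.mp hx
      rw [θ.map_smulₛₗ, hθe]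
      exact Submodule.smul_mem _ _ (Submodule.mem_span_singleton_self e)
  have : Nontrivial (ℂ ∙ e)ᗮ := by
    refine Module.nontrivial_of_finrank_pos (R := ℂ) ?_
    have := Submodule.finrank_add_finrank_orthogonal (ℂ ∙ e)
    rw [finrank_span_singleton (norm_ne_zero_iff.mp (by simp [he]))] at this
    omega
  obtain ⟨f, hf, hθf⟩ := exists_norm_eq_one_fixed (θ.restrict hθF) fun x => Subtype.ext (hθ x)
  have hef : ⟪e, f⟫ = 0 := Submodule.inner_right_of_mem_orthogonal
    (Submodule.mem_span_singleton_self e) f.2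
  have hθf : θ f = f := congrArg Subtype.val hθf
  have hf : ‖(f : E)‖ = 1 := hf
  -- `e + I f` is isotropic: `⟪e + I f, e - I f⟫ = ‖e‖² + I² ‖f‖² = 0`
  set u := e + Complex.I • (f : E)
  have hu : ⟪u, θ u⟫ = 0 := by
    have hfe : ⟪(f : E), e⟫ = 0 := by rw [← inner_conj_symm, hef, map_zero]
    simp only [u, map_add, θ.map_smulₛₗ, hθe, hθf, inner_add_left, inner_add_right,
      inner_smul_left, inner_smul_right, hef, hfe, Complex.conj_I, inner_self_eq_norm_sq_to_K,
      he, hf]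
    ring_nf; simp
  have hu0 : u ≠ 0 := by
    intro h
    have := congrArg (fun x => ⟪e, x⟫) h
    simp [u, hef, inner_self_eq_norm_sq_to_K, he] at this
  refine ⟨(‖u‖ : ℂ)⁻¹ • u, norm_smul_inv_norm hu0, ?_⟩
  rw [θ.map_smulₛₗ, inner_smul_left, inner_smul_right, hu, mul_zero, mul_zero]

lemma apply_map_eq_neg_smul (θ : E →ₗ⋆[ℂ] E) {T : E →ₗ[ℂ] E}
    (hanti : ∀ x, θ (T x) = -T (θ x)) {v : E} {μ : ℝ} (hv : T v = (μ : ℂ) • v) :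
    T (θ v) = (-μ : ℂ) • θ v := by
  rw [neg_smul, ← Complex.conj_ofReal μ, ← θ.map_smulₛₗ, ← hv, hanti, neg_neg]

lemma inner_map_self_eq_zero_of_apply_eq_smul (θ : E →ₗ⋆[ℂ] E) {T : E →ₗ[ℂ] E}
    (hT : T.IsSymmetric) (hanti : ∀ x, θ (T x) = -T (θ x)) {v : E} {μ : ℝ} (hμ : μ ≠ 0)
    (hv : T v = (μ : ℂ) • v) :
    ⟪v, θ v⟫ = 0 := by
  -- `v` and `θ v` are eigenvectors of `T` for the distinct eigenvalues `μ` and `-μ`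
  have h := hT v (θ v)
  rw [hv, apply_map_eq_neg_smul θ hanti hv, inner_smul_left, inner_smul_right,
    Complex.conj_ofReal] at h
  have : (2 * μ : ℂ) * ⟪v, θ v⟫ = 0 := by linear_combination h
  exact (mul_eq_zero.mp this).resolve_left (by exact_mod_cast mul_ne_zero two_ne_zero hμ)

lemma exists_eigenvector_norm_eq_one_inner_map_self_eq_zero [FiniteDimensional ℂ E]
    (θ : E →ₗ⋆[ℂ] E) (hθ : ∀ x, θ (θ x) = x) (hinner : ∀ x y, ⟪θ x, θ y⟫ = ⟪y, x⟫)
    {T : E →ₗ[ℂ] E} (hT : T.IsSymmetric) (hanti : ∀ x, θ (T x) = -T (θ x))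
    (hE : 2 ≤ Module.finrank ℂ E) :
    ∃ (v : E) (μ : ℝ), ‖v‖ = 1 ∧ ⟪v, θ v⟫ = 0 ∧ T v = (μ : ℂ) • v := by
  by_cases hT0 : T = 0
  · obtain ⟨u, hu, huθ⟩ := exists_norm_eq_one_inner_map_self_eq_zero θ hθ hinner hE
    exact ⟨u, 0, hu, huθ, by simp [hT0]⟩
  obtain ⟨i, hi⟩ : ∃ i, hT.eigenvalues rfl i ≠ 0 := by
    by_contra! h
    exact hT0 <| (hT.eigenvectorBasis rfl).toBasis.ext fun i => by
      simp [hT.apply_eigenvectorBasis, h]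
  have hv := hT.apply_eigenvectorBasis rfl i
  exact ⟨_, _, (hT.eigenvectorBasis rfl).orthonormal.1 i,
    inner_map_self_eq_zero_of_apply_eq_smul θ hT hanti hi hv, hv⟩

lemma norm_map_of_inner_map_map (θ : E →ₗ⋆[ℂ] E) (hinner : ∀ x y, ⟪θ x, θ y⟫ = ⟪y, x⟫)
    (x : E) :
    ‖θ x‖ = ‖x‖ := by
  have h := congrArg RCLike.re (hinner x x)
  rw [inner_self_eq_norm_sq, inner_self_eq_norm_sq] at h
  exact (sq_eq_sq₀ (norm_nonneg _) (norm_nonneg _)).mp h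

lemma orthonormal_sumElim_comp (θ : E →ₗ⋆[ℂ] E) (hinner : ∀ x y, ⟪θ x, θ y⟫ = ⟪y, x⟫)
    {ι : Type*} {v : ι → E} (hv : Orthonormal ℂ v)
    (hiso : ∀ i j, ⟪v i, θ (v j)⟫ = 0) :
    Orthonormal ℂ (Sum.elim v (θ ∘ v)) := by
  refine ⟨Sum.rec hv.1 fun i => (norm_map_of_inner_map_map θ hinner _).trans (hv.1 i), ?_⟩
  rintro (i | i) (j | j) hij
  · exact hv.2 fun h => hij (congrArg Sum.inl h)
  · exact hiso i j
  · exact inner_eq_zero_symm.mp (hiso j i)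
  · simp only [Sum.elim_inr, Function.comp_apply, hinner]
    exact hv.2 fun h => hij (congrArg Sum.inr h.symm)

theorem exists_orthonormal_eigenvectors_isotropic [FiniteDimensional ℂ E]
    (θ : E →ₗ⋆[ℂ] E) (hθ : ∀ x, θ (θ x) = x) (hinner : ∀ x y, ⟪θ x, θ y⟫ = ⟪y, x⟫)
    {T : E →ₗ[ℂ] E} (hT : T.IsSymmetric) (hanti : ∀ x, θ (T x) = -T (θ x))
    {N : ℕ} (hN : 2 * N ≤ Module.finrank ℂ E) :
    ∃ (v : Fin N → E) (d : Fin N → ℝ), Orthonormal ℂ v ∧ (∀ i j, ⟪v i, θ (v j)⟫ = 0) ∧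
      ∀ j, T (v j) = (d j : ℂ) • v j := by
  induction N generalizing E with
  | zero =>
    exact ⟨Fin.elim0, Fin.elim0, Orthonormal.of_isEmpty _, fun i => i.elim0, fun j => j.elim0⟩
  | succ N ih =>
    obtain ⟨v₀, μ, hv₀, hv₀θ, hTv₀⟩ :=
      exists_eigenvector_norm_eq_one_inner_map_self_eq_zero θ hθ hinner hT hanti (by omega)
    set S := Submodule.span ℂ {v₀, θ v₀}
    have hv₀S : v₀ ∈ S := Submodule.subset_span (by simp)
    have hθv₀S : θ v₀ ∈ S := Submodule.subset_span (by simp)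
    have hθS : ∀ x ∈ S, θ x ∈ S := fun x hx => by
      refine (Submodule.span_le (p := S.comap θ)).mpr (Set.pair_subset hθv₀S ?_) hx
      simpa [hθ] using hv₀S
    have hTS : ∀ x ∈ S, T x ∈ S := fun x hx => by
      refine (Submodule.span_le (p := S.comap T)).mpr (Set.pair_subset ?_ ?_) hx
      · show T v₀ ∈ S
        exact hTv₀ ▸ S.smul_mem _ hv₀S
      · show T (θ v₀) ∈ S
        exact apply_map_eq_neg_smul θ hanti hTv₀ ▸ S.smul_mem _ hθv₀S
    have hθF := mapsTo_orthogonal_of_inner_map_map θ hθ hinner hθS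
    have hTF := hT.mapsTo_orthogonal hTS
    have hFrank : 2 * N ≤ Module.finrank ℂ Sᗮ := by
      have hS : Module.finrank ℂ S ≤ 2 := by
        classical
        have := finrank_span_finset_le_card (R := ℂ) ({v₀, θ v₀} : Finset E)
        rw [Finset.coe_pair] at this
        exact this.trans Finset.card_le_two
      have := S.finrank_add_finrank_orthogonal
      omega
    obtain ⟨v, d, hv, hiso, hTv⟩ := ih (θ.restrict hθF) (fun x => Subtype.ext (hθ x))
      (fun x y => hinner x y) (hT.restrict_invariant hTF) (fun x => Subtype.ext (hanti x)) hFrank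
    have hv₀F : ∀ x ∈ Sᗮ, ⟪v₀, x⟫ = 0 := fun x => Submodule.inner_right_of_mem_orthogonal hv₀S
    have hθv₀F : ∀ x ∈ Sᗮ, ⟪x, θ v₀⟫ = 0 := fun x => Submodule.inner_left_of_mem_orthogonal hθv₀S
    refine ⟨Fin.cons v₀ fun j => (v j : E), Fin.cons μ d,
      Orthonormal.fin_cons hv₀ (hv.comp_linearIsometry Sᗮ.subtypeₗᵢ) fun j => hv₀F _ (v j).2,
      ?_, ?_⟩
    · intro i j
      cases i using Fin.cases <;> cases j using Fin.cases
      · exact hv₀θ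
      · exact hv₀F _ (hθF _ (v _).2)
      · exact hθv₀F _ (v _).2
      · exact hiso _ _
    · intro j
      cases j using Fin.cases
      · exact hTv₀
      · exact congrArg Subtype.val (hTv _)

end Antiunitary

section ChargeConj

variable {ι : Type*}

def chargeConj : EuclideanSpace ℂ (ι ⊕ ι) →ₗ⋆[ℂ] EuclideanSpace ℂ (ι ⊕ ι) where
  toFun x := WithLp.toLp 2 fun i => star (x i.swap)
  map_add' x y := by ext i; simp
  map_smul' c x := by ext i; simp

@[simp]
lemma chargeConj_apply (x : EuclideanSpace ℂ (ι ⊕ ι)) (i : ι ⊕ ι) :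
    chargeConj x i = star (x i.swap) := rfl

lemma chargeConj_chargeConj (x : EuclideanSpace ℂ (ι ⊕ ι)) : chargeConj (chargeConj x) = x := by
  ext i; simp

lemma inner_chargeConj_chargeConj [Fintype ι] (x y : EuclideanSpace ℂ (ι ⊕ ι)) :
    ⟪chargeConj x, chargeConj y⟫ = ⟪y, x⟫ := by
  simp only [PiLp.inner_apply, chargeConj_apply, RCLike.inner_apply, starRingEnd_apply,
    star_star]
  rw [← (Equiv.sumComm ι ι).sum_comp]
  simp [mul_comm]

lemma chargeConj_toEuclideanLin [Fintype ι] [DecidableEq ι] {M : Matrix (ι ⊕ ι) (ι ⊕ ι) ℂ}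
    (hM : ∀ i j, star (M i.swap j.swap) = -M i j) (x : EuclideanSpace ℂ (ι ⊕ ι)) :
    chargeConj (toEuclideanLin M x) = -toEuclideanLin M (chargeConj x) := by
  ext i
  simp only [chargeConj_apply, toLpLin_apply, PiLp.neg_apply, mulVec, dotProduct, star_sum,
    star_mul', ← Finset.sum_neg_distrib]
  refine ((Equiv.sumComm ι ι).sum_comp _).symm.trans (Finset.sum_congr rfl fun j _ => ?_)
  simp [hM]

end ChargeConj

section MatrixOfRows

variable {ι : Type*} [Fintype ι] [DecidableEq ι]

lemma of_star_mul_mul_conjTranspose_apply (b : ι → EuclideanSpace ℂ ι) (M : Matrix ι ι ℂ)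
    (i j : ι) :
    (of (fun i j => star (b i j)) * M * (of fun i j => star (b i j))ᴴ) i j =
      ⟪b i, toEuclideanLin M (b j)⟫ := by
  simp only [mul_apply, of_apply, conjTranspose_apply, star_star, PiLp.inner_apply,
    RCLike.inner_apply, starRingEnd_apply, toLpLin_apply, mulVec, dotProduct, Finset.sum_mul]
  rw [Finset.sum_comm]
  exact Finset.sum_congr rfl fun k _ => Finset.sum_congr rfl fun l _ => by ring

lemma of_star_mul_mul_conjTranspose_eq_diagonal {b : ι → EuclideanSpace ℂ ι}
    (hb : Orthonormal ℂ b) {M : Matrix ι ι ℂ} {e : ι → ℂ}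
    (hM : ∀ j, toEuclideanLin M (b j) = e j • b j) :
    of (fun i j => star (b i j)) * M * (of fun i j => star (b i j))ᴴ = diagonal e := by
  ext i j
  rw [of_star_mul_mul_conjTranspose_apply, hM, inner_smul_right, orthonormal_iff_ite.mp hb,
    diagonal_apply]
  split_ifs with h <;> simp [h]

lemma of_star_mem_unitaryGroup {b : ι → EuclideanSpace ℂ ι} (hb : Orthonormal ℂ b) :
    of (fun i j => star (b i j)) ∈ unitaryGroup ι ℂ := by
  rw [mem_unitaryGroup_iff, star_eq_conjTranspose]
  simpa using of_star_mul_mul_conjTranspose_eq_diagonal hb (M := 1) (e := fun _ => 1) (by simp)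

end MatrixOfRows

lemma Kmat_transpose_mul_map_star_mul_Kmat_apply {N : ℕ}
    (M : Matrix (Fin N ⊕ Fin N) (Fin N ⊕ Fin N) ℂ) (i j : Fin N ⊕ Fin N) :
    ((Kmat N)ᵀ * M.map star * Kmat N) i j = star (M i.swap j.swap) := by
  rcases i with i | i <;> rcases j with j | j <;>
    simp [Kmat, mul_apply, Fintype.sum_sum_type, one_apply]

lemma Kmat_transpose_mul_map_star_mul_Kmat_of_star {N : ℕ}
    {b : Fin N ⊕ Fin N → EuclideanSpace ℂ (Fin N ⊕ Fin N)}
    (hb : ∀ i, b i.swap = chargeConj (b i)) :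
    (Kmat N)ᵀ * (of fun i j => star (b i j)).map star * Kmat N = of fun i j => star (b i j) := by
  ext i j
  rw [Kmat_transpose_mul_map_star_mul_Kmat_apply]
  simp [hb]

theorem bdg_diagonalization_by_canonical_transformation_general (N : ℕ)
    (H : Matrix (Fin N ⊕ Fin N) (Fin N ⊕ Fin N) ℂ) (hH : H.IsHermitian)
    (hsym : (Kmat N)ᵀ * H.map star * Kmat N = -H) :
    ∃ (W : Matrix (Fin N ⊕ Fin N) (Fin N ⊕ Fin N) ℂ) (d : Fin N → ℝ),
      W ∈ Matrix.unitaryGroup (Fin N ⊕ Fin N) ℂ ∧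
      (Kmat N)ᵀ * W.map star * Kmat N = W ∧
      W * H * Wᴴ =
        Matrix.fromBlocks (Matrix.diagonal fun i => (d i : ℂ)) 0 0
          (-(Matrix.diagonal fun i => (d i : ℂ))) := by
  have hanti : ∀ x, chargeConj (toEuclideanLin H x) = -toEuclideanLin H (chargeConj x) :=
    chargeConj_toEuclideanLin fun i j => by
      rw [← Kmat_transpose_mul_map_star_mul_Kmat_apply, hsym, neg_apply]
  obtain ⟨v, d, hv, hiso, hHv⟩ := exists_orthonormal_eigenvectors_isotropic chargeConj
    chargeConj_chargeConj inner_chargeConj_chargeConj (isSymmetric_toEuclideanLin_iff.mpr hH)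
    hanti (N := N) (by simp [two_mul])
  set b := Sum.elim v (chargeConj ∘ v)
  have hb : Orthonormal ℂ b := orthonormal_sumElim_comp _ inner_chargeConj_chargeConj hv hiso
  refine ⟨of fun i j => star (b i j), d, of_star_mem_unitaryGroup hb,
    Kmat_transpose_mul_map_star_mul_Kmat_of_star ?_, ?_⟩
  · rintro (i | i) <;> simp [b, chargeConj_chargeConj]
  · rw [diagonal_neg, fromBlocks_diagonal]
    refine of_star_mul_mul_conjTranspose_eq_diagonal hb ?_
    rintro (j | j)
    · exact hHv j
    · exact apply_map_eq_neg_smul _ hanti (hHv j)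

/-- a Hermitian BdG Hamiltonian (Kᵀ·H̄·K = -H) can be diagonalized by a
canonical transformation W (unitary with Kᵀ·W̄·K = W) as W·H·W* = [[D, 0], [0, -D]] with
D a real diagonal matrix. -/
theorem bdg_diagonalization_by_canonical_transformation (N : ℕ) (hN : 1 ≤ N)
    (H : Matrix (Fin N ⊕ Fin N) (Fin N ⊕ Fin N) ℂ) (hH : H.IsHermitian)
    (hsym : (Kmat N)ᵀ * H.map star * Kmat N = -H) :
    ∃ (W : Matrix (Fin N ⊕ Fin N) (Fin N ⊕ Fin N) ℂ) (d : Fin N → ℝ),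
      W ∈ Matrix.unitaryGroup (Fin N ⊕ Fin N) ℂ ∧
      (Kmat N)ᵀ * W.map star * Kmat N = W ∧
      W * H * Wᴴ =
        Matrix.fromBlocks (Matrix.diagonal fun i => (d i : ℂ)) 0 0
          (-(Matrix.diagonal fun i => (d i : ℂ))) :=
  bdg_diagonalization_by_canonical_transformation_general N H hH hsym
end
end

section
/- Let n ≥ 1, let H, P, P' ∈ Mat_n(ℂ) be Hermitian and β ∈ ℝ. For δ > 0 the linear map δ + L_H on Mat_n(ℂ) is bijective, and the Kubo coefficient σ_{P,P'}(β,δ) = ½·Tr( L_P(f_β(H)) · (δ + L_H)⁻¹( L_{P'}(H) ) ) converges as δ → 0⁺; moreover the Onsager relation holds in the limit: lim_{δ→0⁺} σ_{P,P'}(β,δ) = − lim_{δ→0⁺} σ_{P',P}(β,δ). -/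
noncomputable section
open Matrix

/-- The Liouvillian L_A(X) = i(XA - AX). -/
noncomputable def Liouv {n : ℕ} (A : Matrix (Fin n) (Fin n) ℂ) :
    Matrix (Fin n) (Fin n) ℂ →ₗ[ℂ] Matrix (Fin n) (Fin n) ℂ where
  toFun X := Complex.I • (X * A - A * X)
  map_add' X Y := by
    simp only [add_mul, mul_add, smul_add, smul_sub]
    module
  map_smul' c X := by
    simp only [RingHom.id_apply, smul_mul_assoc, mul_smul_comm, smul_sub]
    module

/-- The Fermi-Dirac function f_β(H) = (1 + exp(βH))⁻¹ of a matrix. -/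
noncomputable def fermiDirac {n : ℕ} (β : ℝ) (H : Matrix (Fin n) (Fin n) ℂ) :
    Matrix (Fin n) (Fin n) ℂ :=
  (1 + NormedSpace.exp ((β : ℂ) • H))⁻¹

/-! In an eigenbasis of `H`, with eigenvalues `λ`, the map `δ + L_H` multiplies the `(j, k)` entry
by `δ + i(λ_k - λ_j)`, which is nonzero for real `δ ≠ 0`. Writing `Q, R, Φ` for `P, P', f_β(H)` in
that basis, `Φ = diag(φ)` with `φ_j = f_β(λ_j)`, and the Kubo trace is
`∑_{j,k} -i(φ_j - φ_k) Q_jk R_kj · a_jk / (δ + a_jk)` with `a_jk = i(λ_j - λ_k)`. Each summand tends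
to `-i(φ_j - φ_k) Q_jk R_kj`: when `a_jk = 0` both sides vanish because `φ_j = φ_k`. Hence the limit
is `-(i/2) Tr(f_β(H) [P, P'])`, which is antisymmetric in `(P, P')`. -/

open Complex Filter Topology Unitary Function

section

variable {m R : Type*} [Fintype m] [DecidableEq m]

lemma trace_conjStarAlgAut [CommSemiring R] [StarRing R] (u : unitary (Matrix m m R))
    (X : Matrix m m R) : trace (conjStarAlgAut R _ u X) = trace X := by
  rw [conjStarAlgAut_apply, trace_mul_cycle, Unitary.coe_star_mul_self, one_mul]

lemma conjStarAlgAut_inv [CommRing R] [StarRing R] (u : unitary (Matrix m m R))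
    (A : Matrix m m R) : conjStarAlgAut R _ u A⁻¹ = (conjStarAlgAut R _ u A)⁻¹ := by
  rw [conjStarAlgAut_apply, conjStarAlgAut_apply, Matrix.mul_inv_rev, Matrix.mul_inv_rev,
    inv_eq_left_inv (Unitary.mul_star_self_of_mem u.2),
    inv_eq_left_inv (Unitary.star_mul_self_of_mem u.2), mul_assoc]

lemma exp_conjStarAlgAut (u : unitary (Matrix m m ℂ)) (A : Matrix m m ℂ) :
    NormedSpace.exp (conjStarAlgAut ℂ _ u A) = conjStarAlgAut ℂ _ u (NormedSpace.exp A) := by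
  simpa using exp_units_conj (Unitary.toUnits u) A

lemma trace_diagonal_mul_commutator [CommRing R] (φ : m → R) (A B : Matrix m m R) :
    trace (diagonal φ * (A * B - B * A)) = ∑ j, ∑ k, (φ j - φ k) * A j k * B k j := by
  rw [Matrix.mul_sub, trace_sub]
  simp only [trace, diag, diagonal_mul]
  simp only [mul_apply, Finset.mul_sum]
  rw [Finset.sum_comm (f := fun j k => φ j * (B j k * A k j)), ← Finset.sum_sub_distrib]
  refine Finset.sum_congr rfl fun j _ => ?_
  rw [← Finset.sum_sub_distrib]
  refine Finset.sum_congr rfl fun k _ => ?_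
  ring

end

section Liouvillian

variable {n : ℕ}

lemma Liouv_apply (A X : Matrix (Fin n) (Fin n) ℂ) : Liouv A X = I • (X * A - A * X) := rfl

lemma map_Liouv {F : Type*} [FunLike F (Matrix (Fin n) (Fin n) ℂ) (Matrix (Fin n) (Fin n) ℂ)]
    [AlgHomClass F ℂ _ _] (e : F) (A X : Matrix (Fin n) (Fin n) ℂ) :
    e (Liouv A X) = Liouv (e A) (e X) := by
  simp only [Liouv_apply, map_smul, map_sub, map_mul]

lemma Liouv_diagonal_apply (v : Fin n → ℂ) (X : Matrix (Fin n) (Fin n) ℂ) (j k : Fin n) :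
    Liouv (diagonal v) X j k = I * (v k - v j) * X j k := by
  simp only [Liouv_apply, Matrix.smul_apply, Matrix.sub_apply, mul_diagonal, diagonal_mul,
    smul_eq_mul]
  ring

lemma Liouv_apply_diagonal (A : Matrix (Fin n) (Fin n) ℂ) (v : Fin n → ℂ) (j k : Fin n) :
    Liouv A (diagonal v) j k = I * (v j - v k) * A j k := by
  simp only [Liouv_apply, Matrix.smul_apply, Matrix.sub_apply, mul_diagonal, diagonal_mul,
    smul_eq_mul]
  ring

end Liouvillian

section DiagonalResolvent

variable {n : ℕ} (d : Fin n → ℝ) {δ : ℝ}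

def diagonalResolvent (δ : ℝ) (Y : Matrix (Fin n) (Fin n) ℂ) : Matrix (Fin n) (Fin n) ℂ :=
  of fun j k => Y j k / (δ + I * (d k - d j))

lemma ofReal_add_I_mul_sub_ne_zero (hδ : δ ≠ 0) (a b : ℝ) : (δ : ℂ) + I * (a - b) ≠ 0 :=
  fun h => hδ (by simpa using congrArg re h)

lemma smul_add_Liouv_diagonal_apply (δ : ℝ) (X : Matrix (Fin n) (Fin n) ℂ) (j k : Fin n) :
    (δ • X + Liouv (diagonal fun i => (d i : ℂ)) X) j k = (δ + I * (d k - d j)) * X j k := by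
  rw [Matrix.add_apply, Liouv_diagonal_apply, Matrix.smul_apply, Complex.real_smul]
  ring

lemma smul_add_Liouv_diagonal_diagonalResolvent (hδ : δ ≠ 0) (Y : Matrix (Fin n) (Fin n) ℂ) :
    δ • diagonalResolvent d δ Y + Liouv (diagonal fun i => (d i : ℂ)) (diagonalResolvent d δ Y)
      = Y := by
  ext j k
  rw [smul_add_Liouv_diagonal_apply, diagonalResolvent, of_apply,
    mul_div_cancel₀ _ (ofReal_add_I_mul_sub_ne_zero hδ _ _)]

lemma injective_smul_add_Liouv_diagonal (hδ : δ ≠ 0) :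
    Injective fun X : Matrix (Fin n) (Fin n) ℂ =>
      δ • X + Liouv (diagonal fun i => (d i : ℂ)) X := by
  intro X X' h
  ext j k
  have hjk := congrFun (congrFun h j) k
  simp only [smul_add_Liouv_diagonal_apply] at hjk
  exact mul_left_cancel₀ (ofReal_add_I_mul_sub_ne_zero hδ _ _) hjk

lemma trace_Liouv_diagonal_mul_diagonalResolvent (φ : Fin n → ℂ) (Q R : Matrix (Fin n) (Fin n) ℂ)
    (δ : ℝ) :
    trace (Liouv Q (diagonal φ) *
        diagonalResolvent d δ (Liouv R (diagonal fun i => (d i : ℂ)))) =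
      ∑ j, ∑ k, -(I * (φ j - φ k) * Q j k * R k j) *
        (I * (d j - d k) / (δ + I * (d j - d k))) := by
  simp only [trace, diag, mul_apply, diagonalResolvent, of_apply, Liouv_apply_diagonal]
  refine Finset.sum_congr rfl fun j _ => Finset.sum_congr rfl fun k _ => ?_
  ring

lemma tendsto_mul_div_add_self (c a : ℂ) (h : a = 0 → c = 0) :
    Tendsto (fun δ : ℝ => c * (a / (δ + a))) (𝓝 0) (𝓝 c) := by
  by_cases ha : a = 0
  · simp [ha, h ha]
  · have hden : Tendsto (fun δ : ℝ => (δ : ℂ) + a) (𝓝 0) (𝓝 a) := by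
      simpa using (continuous_ofReal.tendsto 0).add_const a
    simpa [ha] using (tendsto_const_nhds (x := a)).div hden ha |>.const_mul c

lemma tendsto_trace_Liouv_diagonal_mul_diagonalResolvent (φ : Fin n → ℂ)
    (hφ : ∀ j k, d j = d k → φ j = φ k) (Q R : Matrix (Fin n) (Fin n) ℂ) :
    Tendsto (fun δ : ℝ => trace (Liouv Q (diagonal φ) *
        diagonalResolvent d δ (Liouv R (diagonal fun i => (d i : ℂ)))))
      (𝓝 0) (𝓝 (-I * trace (diagonal φ * (Q * R - R * Q)))) := by
  simp_rw [trace_Liouv_diagonal_mul_diagonalResolvent, trace_diagonal_mul_commutator,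
    Finset.mul_sum]
  refine tendsto_finsetSum _ fun j _ => tendsto_finsetSum _ fun k _ => ?_
  rw [show -I * ((φ j - φ k) * Q j k * R k j) = -(I * (φ j - φ k) * Q j k * R k j) by ring]
  refine tendsto_mul_div_add_self _ _ fun h => ?_
  have hd : d j = d k := by simpa [sub_eq_zero] using h
  simp [hφ j k hd]

end DiagonalResolvent

namespace Matrix.IsHermitian

variable {n : ℕ} {H : Matrix (Fin n) (Fin n) ℂ} {δ : ℝ}

lemma smul_add_Liouv_eq_conj (hH : H.IsHermitian) (δ : ℝ) :
    (fun X => δ • X + Liouv H X) = fun X => conjStarAlgAut ℂ _ hH.eigenvectorUnitary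
      (δ • (conjStarAlgAut ℂ _ hH.eigenvectorUnitary).symm X +
        Liouv (diagonal fun i => (hH.eigenvalues i : ℂ))
          ((conjStarAlgAut ℂ _ hH.eigenvectorUnitary).symm X)) := by
  funext X
  set C := conjStarAlgAut ℂ (Matrix (Fin n) (Fin n) ℂ) hH.eigenvectorUnitary
  have hδ : C (δ • C.symm X) = δ • X := by
    rw [← Complex.coe_smul, map_smul, C.apply_symm_apply, Complex.coe_smul]
  rw [map_add, hδ, map_Liouv, C.apply_symm_apply]
  exact congrArg (fun A => δ • X + Liouv A X) hH.spectral_theorem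

lemma bijective_smul_add_Liouv (hH : H.IsHermitian) (hδ : δ ≠ 0) :
    Bijective fun X : Matrix (Fin n) (Fin n) ℂ => δ • X + Liouv H X := by
  rw [hH.smul_add_Liouv_eq_conj]
  have hdiag : Bijective fun X => δ • X + Liouv (diagonal fun i => (hH.eigenvalues i : ℂ)) X :=
    ⟨injective_smul_add_Liouv_diagonal _ hδ,
      fun Y => ⟨_, smul_add_Liouv_diagonal_diagonalResolvent _ hδ Y⟩⟩
  exact (EquivLike.bijective _).comp (hdiag.comp (EquivLike.bijective _))

lemma invFun_smul_add_Liouv (hH : H.IsHermitian) (hδ : δ ≠ 0) (Y : Matrix (Fin n) (Fin n) ℂ) :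
    invFun (fun X => δ • X + Liouv H X) Y = conjStarAlgAut ℂ _ hH.eigenvectorUnitary
      (diagonalResolvent hH.eigenvalues δ ((conjStarAlgAut ℂ _ hH.eigenvectorUnitary).symm Y)) := by
  have hbij := hH.bijective_smul_add_Liouv hδ
  apply hbij.injective
  refine (invFun_eq (hbij.surjective Y)).trans ?_
  rw [hH.smul_add_Liouv_eq_conj]
  simp only [StarAlgEquiv.symm_apply_apply, smul_add_Liouv_diagonal_diagonalResolvent _ hδ,
    StarAlgEquiv.apply_symm_apply]

theorem tendsto_trace_Liouv_cfc_mul_invFun (hH : H.IsHermitian) (g : ℝ → ℝ)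
    (P P' : Matrix (Fin n) (Fin n) ℂ) :
    Tendsto (fun δ : ℝ => trace (Liouv P (cfc g H) *
        invFun (fun X => δ • X + Liouv H X) (Liouv P' H)))
      (𝓝[≠] 0) (𝓝 (-I * trace (cfc g H * (P * P' - P' * P)))) := by
  set C := conjStarAlgAut ℂ (Matrix (Fin n) (Fin n) ℂ) hH.eigenvectorUnitary with hC
  obtain ⟨Q, rfl⟩ : ∃ Q, P = C Q := ⟨C.symm P, (C.apply_symm_apply P).symm⟩
  obtain ⟨R, rfl⟩ : ∃ R, P' = C R := ⟨C.symm P', (C.apply_symm_apply P').symm⟩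
  have hD : C.symm H = diagonal fun i => (hH.eigenvalues i : ℂ) :=
    (congrArg C.symm hH.spectral_theorem).trans (C.symm_apply_apply _)
  have hg : cfc g H = C (diagonal fun i => (g (hH.eigenvalues i) : ℂ)) := hH.cfc_eq g
  have hlim := tendsto_trace_Liouv_diagonal_mul_diagonalResolvent hH.eigenvalues
    (fun i => (g (hH.eigenvalues i) : ℂ)) (fun j k h => by simp only [h]) Q R
  rw [hg, ← map_mul, ← map_mul, ← map_sub, ← map_mul, trace_conjStarAlgAut]
  refine (tendsto_nhdsWithin_of_tendsto_nhds hlim).congr' ?_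
  filter_upwards [self_mem_nhdsWithin] with δ hδ
  rw [hH.invFun_smul_add_Liouv hδ, ← hC, map_Liouv, C.symm_apply_apply, hD, ← map_Liouv,
    ← map_mul, trace_conjStarAlgAut]

lemma fermiDirac_eq_cfc (hH : H.IsHermitian) (β : ℝ) :
    fermiDirac β H = cfc (fun x => (1 + Real.exp (β * x))⁻¹) H := by
  set C := conjStarAlgAut ℂ (Matrix (Fin n) (Fin n) ℂ) hH.eigenvectorUnitary
  have hβH : (β : ℂ) • H = C (diagonal fun i => ((β * hH.eigenvalues i : ℝ) : ℂ)) := by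
    conv_lhs => rw [hH.spectral_theorem]
    rw [← map_smul, ← diagonal_smul]
    congr 2
    funext i
    simp
  have hexp : NormedSpace.exp (fun i => ((β * hH.eigenvalues i : ℝ) : ℂ)) =
      fun i => ((Real.exp (β * hH.eigenvalues i) : ℝ) : ℂ) := by
    funext i
    rw [Pi.coe_exp, ← Complex.exp_eq_exp_ℂ, Complex.ofReal_exp]
  have hinv : (1 + diagonal fun i => ((Real.exp (β * hH.eigenvalues i) : ℝ) : ℂ))⁻¹ =
      diagonal fun i => (((1 + Real.exp (β * hH.eigenvalues i))⁻¹ : ℝ) : ℂ) := by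
    refine inv_eq_left_inv ?_
    rw [← diagonal_one, diagonal_add, diagonal_mul_diagonal]
    congr 1
    funext i
    exact_mod_cast inv_mul_cancel₀ (by positivity : 1 + Real.exp (β * hH.eigenvalues i) ≠ 0)
  rw [hH.cfc_eq, IsHermitian.cfc, fermiDirac, hβH, exp_conjStarAlgAut, exp_diagonal, ← map_one C,
    ← map_add, ← conjStarAlgAut_inv, hexp, hinv]
  rfl

end Matrix.IsHermitian

theorem kubo_onsager_general (n : ℕ)
    (H P P' : Matrix (Fin n) (Fin n) ℂ)
    (hH : H.IsHermitian) (β : ℝ) :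
    (∀ δ : ℝ, 0 < δ →
      Function.Bijective (fun X : Matrix (Fin n) (Fin n) ℂ => δ • X + Liouv H X)) ∧
    ∃ c : ℂ,
      Filter.Tendsto (fun δ : ℝ =>
          (1 / 2 : ℂ) * Matrix.trace (Liouv P (fermiDirac β H) *
            Function.invFun (fun X : Matrix (Fin n) (Fin n) ℂ => δ • X + Liouv H X)
              (Liouv P' H)))
        (nhdsWithin 0 (Set.Ioi 0)) (nhds c) ∧
      Filter.Tendsto (fun δ : ℝ =>
          (1 / 2 : ℂ) * Matrix.trace (Liouv P' (fermiDirac β H) *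
            Function.invFun (fun X : Matrix (Fin n) (Fin n) ℂ => δ • X + Liouv H X)
              (Liouv P H)))
        (nhdsWithin 0 (Set.Ioi 0)) (nhds (-c)) := by
  have hIoi : 𝓝[>] (0 : ℝ) ≤ 𝓝[≠] 0 := nhdsWithin_mono _ fun _ hδ => ne_of_gt hδ
  have hlim (Q R : Matrix (Fin n) (Fin n) ℂ) :=
    ((hH.tendsto_trace_Liouv_cfc_mul_invFun (fun x => (1 + Real.exp (β * x))⁻¹) Q R).mono_left
      hIoi).const_mul (1 / 2 : ℂ)
  rw [hH.fermiDirac_eq_cfc]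
  refine ⟨fun δ hδ => hH.bijective_smul_add_Liouv hδ.ne', _, hlim P P', ?_⟩
  convert hlim P' P using 2
  rw [← neg_sub, mul_neg, trace_neg]
  ring

/-- Kubo formula and Onsager relation: for Hermitian H, P, P' and β ∈ ℝ,
the superoperator δ + L_H is bijective for δ > 0, the Kubo coefficient
σ_{P,P'}(β,δ) = ½·Tr(L_P(f_β(H))·(δ + L_H)⁻¹(L_{P'}(H))) converges as δ → 0⁺, and the
Onsager relation lim σ_{P,P'} = -lim σ_{P',P} holds. -/
theorem kubo_onsager (n : ℕ) (hn : 1 ≤ n)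
    (H P P' : Matrix (Fin n) (Fin n) ℂ)
    (hH : H.IsHermitian) (hP : P.IsHermitian) (hP' : P'.IsHermitian) (β : ℝ) :
    (∀ δ : ℝ, 0 < δ →
      Function.Bijective (fun X : Matrix (Fin n) (Fin n) ℂ => δ • X + Liouv H X)) ∧
    ∃ c : ℂ,
      Filter.Tendsto (fun δ : ℝ =>
          (1 / 2 : ℂ) * Matrix.trace (Liouv P (fermiDirac β H) *
            Function.invFun (fun X : Matrix (Fin n) (Fin n) ℂ => δ • X + Liouv H X)
              (Liouv P' H)))
        (nhdsWithin 0 (Set.Ioi 0)) (nhds c) ∧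
      Filter.Tendsto (fun δ : ℝ =>
          (1 / 2 : ℂ) * Matrix.trace (Liouv P' (fermiDirac β H) *
            Function.invFun (fun X : Matrix (Fin n) (Fin n) ℂ => δ • X + Liouv H X)
              (Liouv P H)))
        (nhdsWithin 0 (Set.Ioi 0)) (nhds (-c)) :=
  kubo_onsager_general n H P P' hH β
end
end

section
/- Let n ≥ 1, let H, P ∈ Mat_n(ℂ) be Hermitian, J ∈ Mat_n(ℂ) arbitrary, β ∈ ℝ, δ > 0 and λ ∈ ℝ. Then the linear map δ − L_H − λ·L_P on Mat_n(ℂ) is bijective, as is δ + L_H + λ·L_P, and the exact linear-response identity holds: (δ/2)·Tr( (δ − L_H − λ·L_P)⁻¹( f_β(H) ) · J ) = ½·Tr( f_β(H)·J ) + (λ/2)·Tr( L_P(f_β(H)) · (δ + L_H + λ·L_P)⁻¹( J ) ). In particular, the time-averaged current is, to first order in λ, equal to λ times the Kubo formula ½·Tr( L_P(f_β(H)) · (δ + L_H)⁻¹(J) ). -/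
noncomputable section
open Matrix

/-!
With `A = H + λP` the two maps are `δ - L_A` and `δ + L_A`. As `A` is Hermitian, `L_A` is
skew-adjoint for the Hilbert–Schmidt pairing, so `tr(X* L_A X)` is purely imaginary while
`δ tr(X* X)` is real; hence `δ - L_A` is injective, and bijective in finite dimension. For the
bilinear pairing `tr(X Y)` the transpose of `δ + L_A` is `δ - L_A`, which gives
`tr(F J) = tr(f G)` with `f = f_β(H)`; expanding `tr(f J) = tr(f (δ + L_A) G)` and using
`L_H f = 0` (as `f` is a function of `H`) leaves only the `λ L_P` term.
-/

open scoped ComplexOrder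

theorem Commute.ringInverse_right {M₀ : Type*} [MonoidWithZero M₀] {a b : M₀}
    (h : Commute a b) : Commute a (Ring.inverse b) := by
  by_cases hb : IsUnit b
  · obtain ⟨u, rfl⟩ := hb
    rw [Ring.inverse_unit]
    exact h.units_inv_right
  · rw [Ring.inverse_non_unit _ hb]
    exact Commute.zero_right a

section Liouvillian

variable {n : ℕ}

theorem liouv_apply (A X : Matrix (Fin n) (Fin n) ℂ) :
    Liouv A X = Complex.I • (X * A - A * X) := rfl

theorem liouv_eq_zero_of_commute {A X : Matrix (Fin n) (Fin n) ℂ} (h : Commute A X) :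
    Liouv A X = 0 := by
  rw [liouv_apply, h.eq, sub_self, smul_zero]

theorem liouv_add (A B X : Matrix (Fin n) (Fin n) ℂ) :
    Liouv (A + B) X = Liouv A X + Liouv B X := by
  simp only [liouv_apply, mul_add, add_mul]
  module

theorem liouv_smul (c : ℝ) (A X : Matrix (Fin n) (Fin n) ℂ) :
    Liouv (c • A) X = c • Liouv A X := by
  simp only [liouv_apply, mul_smul_comm, smul_mul_assoc]
  module

theorem liouv_neg (A X : Matrix (Fin n) (Fin n) ℂ) : Liouv (-A) X = -Liouv A X := by
  simp only [liouv_apply, mul_neg, neg_mul]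
  module

theorem liouv_fermiDirac (β : ℝ) (H : Matrix (Fin n) (Fin n) ℂ) :
    Liouv H (fermiDirac β H) = 0 := by
  have hexp : Commute H (1 + NormedSpace.exp ((β : ℂ) • H)) :=
    (Commute.one_right H).add_right ((Commute.refl H).smul_right (β : ℂ)).exp_right
  apply liouv_eq_zero_of_commute
  rw [fermiDirac, nonsing_inv_eq_ringInverse]
  exact hexp.ringInverse_right

theorem trace_liouv_mul (A X Y : Matrix (Fin n) (Fin n) ℂ) :
    trace (Liouv A X * Y) = -trace (X * Liouv A Y) := by
  have hcyclic : trace (A * (X * Y)) = trace (X * (Y * A)) := by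
    rw [trace_mul_comm, Matrix.mul_assoc]
  simp only [liouv_apply, Matrix.smul_mul, Matrix.mul_smul, sub_mul, mul_sub, trace_smul,
    trace_sub, hcyclic, Matrix.mul_assoc]
  ring

theorem conjTranspose_liouv {A : Matrix (Fin n) (Fin n) ℂ} (hA : A.IsHermitian)
    (X : Matrix (Fin n) (Fin n) ℂ) : (Liouv A X)ᴴ = Liouv A Xᴴ := by
  simp only [liouv_apply, conjTranspose_smul, conjTranspose_sub, conjTranspose_mul, hA.eq,
    Complex.star_def, Complex.conj_I]
  module

theorem star_trace_conjTranspose_mul_liouv {A : Matrix (Fin n) (Fin n) ℂ} (hA : A.IsHermitian)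
    (X : Matrix (Fin n) (Fin n) ℂ) :
    star (trace (Xᴴ * Liouv A X)) = -trace (Xᴴ * Liouv A X) := by
  rw [← trace_conjTranspose, conjTranspose_mul, conjTranspose_conjTranspose,
    conjTranspose_liouv hA, trace_liouv_mul]

theorem eq_zero_of_liouv_eq_smul {A X : Matrix (Fin n) (Fin n) ℂ} (hA : A.IsHermitian)
    {δ : ℝ} (hδ : δ ≠ 0) (hX : Liouv A X = δ • X) : X = 0 := by
  set s := trace (Xᴴ * X)
  have hs_real : star s = s := by
    rw [← trace_conjTranspose, conjTranspose_mul, conjTranspose_conjTranspose]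
  have hpairing : trace (Xᴴ * Liouv A X) = δ • s := by
    rw [hX, Matrix.mul_smul, trace_smul]
  have hδs : δ • s = -(δ • s) := by
    rw [← hpairing, ← star_trace_conjTranspose_mul_liouv hA, hpairing, star_smul,
      star_trivial, hs_real]
  have hs : s = 0 := (smul_eq_zero.mp (self_eq_neg.mp hδs)).resolve_left hδ
  exact trace_conjTranspose_mul_self_eq_zero_iff.mp hs

theorem smul_sub_liouv_bijective {A : Matrix (Fin n) (Fin n) ℂ} (hA : A.IsHermitian)
    {δ : ℝ} (hδ : δ ≠ 0) :
    Function.Bijective (fun X : Matrix (Fin n) (Fin n) ℂ => δ • X - Liouv A X) := by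
  let T : Matrix (Fin n) (Fin n) ℂ →ₗ[ℂ] Matrix (Fin n) (Fin n) ℂ := δ • LinearMap.id - Liouv A
  have hinj : Function.Injective T := (injective_iff_map_eq_zero T).mpr fun X hX =>
    eq_zero_of_liouv_eq_smul hA hδ (sub_eq_zero.mp hX).symm
  exact ⟨hinj, LinearMap.injective_iff_surjective.mp hinj⟩

theorem trace_mul_smul_add_liouv (c : ℝ) (A F G : Matrix (Fin n) (Fin n) ℂ) :
    trace (F * (c • G + Liouv A G)) = trace ((c • F - Liouv A F) * G) := by
  rw [mul_add, sub_mul, trace_add, trace_sub, Matrix.mul_smul, Matrix.smul_mul, trace_smul,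
    trace_liouv_mul, sub_neg_eq_add]

end Liouvillian

theorem exact_linear_response_general (n : ℕ)
    (H P J : Matrix (Fin n) (Fin n) ℂ) (hH : H.IsHermitian) (hP : P.IsHermitian)
    (β δ lam : ℝ) (hδ : 0 < δ) :
    Function.Bijective (fun X : Matrix (Fin n) (Fin n) ℂ =>
      δ • X - Liouv H X - lam • Liouv P X) ∧
    Function.Bijective (fun X : Matrix (Fin n) (Fin n) ℂ =>
      δ • X + Liouv H X + lam • Liouv P X) ∧
    (∀ F G : Matrix (Fin n) (Fin n) ℂ,
      δ • F - Liouv H F - lam • Liouv P F = fermiDirac β H →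
      δ • G + Liouv H G + lam • Liouv P G = J →
      ((δ : ℂ) / 2) * Matrix.trace (F * J) =
        (1 / 2) * Matrix.trace (fermiDirac β H * J) +
          ((lam : ℂ) / 2) * Matrix.trace (Liouv P (fermiDirac β H) * G)) := by
  set A := H + lam • P
  have hA : A.IsHermitian := hH.add (hP.smul (IsSelfAdjoint.all lam))
  have hminus (X : Matrix (Fin n) (Fin n) ℂ) :
      δ • X - Liouv H X - lam • Liouv P X = δ • X - Liouv A X := by
    rw [liouv_add, liouv_smul, sub_sub]
  have hplus (X : Matrix (Fin n) (Fin n) ℂ) :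
      δ • X + Liouv H X + lam • Liouv P X = δ • X + Liouv A X := by
    rw [liouv_add, liouv_smul, add_assoc]
  simp only [hminus, hplus]
  refine ⟨smul_sub_liouv_bijective hA hδ.ne', ?_, fun F G hF hG => ?_⟩
  · simpa only [liouv_neg, sub_neg_eq_add] using smul_sub_liouv_bijective hA.neg hδ.ne'
  set f := fermiDirac β H
  have hLf : Liouv A f = lam • Liouv P f := by
    rw [liouv_add, liouv_smul, liouv_fermiDirac, zero_add]
  have hduality : trace (F * J) = trace (f * G) := by
    rw [← hF, ← hG, trace_mul_smul_add_liouv]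
  have hfJ : trace (f * J) = δ * trace (f * G) - lam * trace (Liouv P f * G) := by
    rw [← hG, mul_add, trace_add, Matrix.mul_smul, trace_smul, ← neg_neg (trace (f * Liouv A G)),
      ← trace_liouv_mul, hLf, Matrix.smul_mul, trace_smul, Complex.real_smul, Complex.real_smul,
      sub_eq_add_neg]
  rw [hduality, hfJ]
  ring

/-- Appendix B, exact linear response identity: for Hermitian H, P,
real β, δ > 0 and λ ∈ ℝ, the superoperators δ - L_H - λL_P and δ + L_H + λL_P are
bijective, and if F = (δ - L_H - λL_P)⁻¹(f_β(H)) and G = (δ + L_H + λL_P)⁻¹(J), then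
(δ/2)·Tr(F·J) = ½·Tr(f_β(H)·J) + (λ/2)·Tr(L_P(f_β(H))·G). -/
theorem exact_linear_response (n : ℕ) (hn : 1 ≤ n)
    (H P J : Matrix (Fin n) (Fin n) ℂ) (hH : H.IsHermitian) (hP : P.IsHermitian)
    (β δ lam : ℝ) (hδ : 0 < δ) :
    Function.Bijective (fun X : Matrix (Fin n) (Fin n) ℂ =>
      δ • X - Liouv H X - lam • Liouv P X) ∧
    Function.Bijective (fun X : Matrix (Fin n) (Fin n) ℂ =>
      δ • X + Liouv H X + lam • Liouv P X) ∧
    (∀ F G : Matrix (Fin n) (Fin n) ℂ,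
      δ • F - Liouv H F - lam • Liouv P F = fermiDirac β H →
      δ • G + Liouv H G + lam • Liouv P G = J →
      ((δ : ℂ) / 2) * Matrix.trace (F * J) =
        (1 / 2) * Matrix.trace (fermiDirac β H * J) +
          ((lam : ℂ) / 2) * Matrix.trace (Liouv P (fermiDirac β H) * G)) :=
  exact_linear_response_general n H P J hH hP β δ lam hδ
end
end
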